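/- arXiv:2211.07694 — 2 statements merged into one kernel-verified Lean document; each statement's English description precedes it below -/
import Mathlib

section
/- Let α : [0,1] → [0,∞) be nondecreasing and bounded. Then the spectral risk measure R_α is concave on the set of Borel probability measures on ℝ with finite first moment: for all such μ_0, μ_1 and t ∈ [0,1], R_α((1-t)μ_0 + t μ_1) ≥ (1-t) R_α(μ_0) + t R_α(μ_1). -/
open MeasureTheory Set

/-- Quantile (generalized inverse c.d.f.) of a probability measure on ℝ. -/
noncomputable def quantile (μ : Measure ℝ) (m : ℝ) : ℝ :=
  sInf {x : ℝ | ENNReal.ofReal m ≤ μ (Iic x)}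

/-- The spectral risk measure `R_α(μ) = ∫_0^1 F_μ⁻¹(m) α(m) dm`. -/
noncomputable def specRisk (α : ℝ → ℝ) (μ : Measure ℝ) : ℝ :=
  ∫ m in Icc (0:ℝ) 1, quantile μ m * α m

/-!
Replace `α` by its right-continuous version `f` (they agree a.e.) and write
`f m = f 0 + df((0, m])`. Fubini then gives
`R_α(μ) = f(0) 𝔼_μ[Y] + ∫_{(0,1)} (∫_s^1 F_μ⁻¹) df(s)`.
The first term is affine in `μ`. For the second, the Rockafellar–Uryasev formula
`∫_s^1 F_μ⁻¹ = min_x ((1 - s) x + 𝔼_μ (Y - x)⁺)`, with the minimum attained at `x = F_μ⁻¹(s)`,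
exhibits each tail integral as an infimum of affine functions of `μ`, hence concave in `μ`;
integrating against the positive measure `df` keeps concavity. Integrals of `F_μ⁻¹` become
`μ`-expectations because `F_μ⁻¹` pushes Lebesgue measure on `(0,1)` forward to `μ`.
-/

open Filter Topology ProbabilityTheory

noncomputable def unitVolume : Measure ℝ := volume.restrict (Ioo 0 1)

instance : IsProbabilityMeasure unitVolume :=
  ⟨by rw [unitVolume, Measure.restrict_apply_univ, Real.volume_Ioo]; norm_num⟩

lemma ae_mem_Ioo_unitVolume : ∀ᵐ m ∂unitVolume, m ∈ Ioo (0 : ℝ) 1 :=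
  ae_restrict_mem measurableSet_Ioo

lemma Real.volume_Ioo_inter_Iic {c : ℝ} (hc : c ≤ 1) :
    volume (Ioo 0 1 ∩ Iic c) = ENNReal.ofReal c := by
  refine le_antisymm ?_ ?_
  · calc volume (Ioo 0 1 ∩ Iic c) ≤ volume (Ioc 0 c) :=
          measure_mono fun y hy => ⟨hy.1.1, hy.2⟩
      _ = ENNReal.ofReal c := by rw [Real.volume_Ioc, sub_zero]
  · calc ENNReal.ofReal c = volume (Ioo 0 c) := by rw [Real.volume_Ioo, sub_zero]
      _ ≤ volume (Ioo 0 1 ∩ Iic c) :=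
          measure_mono fun y hy => ⟨⟨hy.1, hy.2.trans_le hc⟩, hy.2.le⟩

section Quantile

variable (μ : Measure ℝ) [IsProbabilityMeasure μ]

lemma quantile_le_iff {m : ℝ} (hm : m ∈ Ioo 0 1) (x : ℝ) :
    quantile μ m ≤ x ↔ m ≤ cdf μ x := by
  have hS : {x : ℝ | ENNReal.ofReal m ≤ μ (Iic x)} = {x | m ≤ cdf μ x} := by
    ext x
    rw [mem_ofPred_eq, mem_ofPred_eq, ← ofReal_cdf,
      ENNReal.ofReal_le_ofReal_iff (cdf_nonneg μ x)]
  rw [quantile, hS]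
  have hne : {x | m ≤ cdf μ x}.Nonempty :=
    ((tendsto_cdf_atTop μ).eventually_const_le hm.2).exists
  obtain ⟨a, ha⟩ := eventually_atBot.1 ((tendsto_cdf_atBot μ).eventually_lt_const hm.1)
  have hbdd : BddBelow {x | m ≤ cdf μ x} :=
    ⟨a, fun y hy => le_of_not_gt fun hya => (ha y hya.le).not_ge hy⟩
  refine ⟨fun hx => ?_, fun hx => csInf_le hbdd hx⟩
  refine le_trans ?_ (monotone_cdf μ hx)
  -- right-continuity of the cdf puts the infimum itself in the set
  refine ge_of_tendsto (((cdf μ).right_continuous _).mono_left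
    (nhdsWithin_mono _ Ioi_subset_Ici_self)) ?_
  refine eventually_nhdsWithin_of_forall fun y hy => ?_
  obtain ⟨z, hz, hzy⟩ := exists_lt_of_csInf_lt hne hy
  exact hz.trans (monotone_cdf μ hzy.le)

lemma quantile_monotoneOn : MonotoneOn (quantile μ) (Ioo 0 1) := fun _ ha _ hb hab =>
  (quantile_le_iff μ ha _).2 (hab.trans ((quantile_le_iff μ hb _).1 le_rfl))

lemma aemeasurable_quantile : AEMeasurable (quantile μ) unitVolume :=
  aemeasurable_restrict_of_monotoneOn measurableSet_Ioo (quantile_monotoneOn μ)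

lemma map_quantile_unitVolume : unitVolume.map (quantile μ) = μ := by
  have := Measure.isProbabilityMeasure_map (μ := unitVolume) (aemeasurable_quantile μ)
  refine Measure.ext_of_Iic _ _ fun x => ?_
  have hpre : quantile μ ⁻¹' Iic x ∩ Ioo 0 1 = Ioo 0 1 ∩ Iic (cdf μ x) := by
    ext m
    simp only [mem_inter_iff, mem_preimage, mem_Iic]
    exact ⟨fun h => ⟨h.2, (quantile_le_iff μ h.2 x).1 h.1⟩,
      fun h => ⟨(quantile_le_iff μ h.1 x).2 h.2, h.1⟩⟩
  rw [Measure.map_apply_of_aemeasurable (aemeasurable_quantile μ) measurableSet_Iic,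
    unitVolume, Measure.restrict_apply' measurableSet_Ioo, hpre,
    Real.volume_Ioo_inter_Iic (cdf_le_one μ x), ofReal_cdf]

lemma integral_comp_quantile {g : ℝ → ℝ} (hg : AEStronglyMeasurable g μ) :
    ∫ m, g (quantile μ m) ∂unitVolume = ∫ y, g y ∂μ := by
  rw [← integral_map (aemeasurable_quantile μ) (by rwa [map_quantile_unitVolume]),
    map_quantile_unitVolume]

lemma MeasureTheory.Integrable.comp_quantile {g : ℝ → ℝ} (hg : Integrable g μ) :
    Integrable (fun m => g (quantile μ m)) unitVolume :=
  (map_quantile_unitVolume μ ▸ hg).comp_aemeasurable (aemeasurable_quantile μ)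

end Quantile

noncomputable def quantileTailIntegral (μ : Measure ℝ) (s : ℝ) : ℝ :=
  ∫ m in Ici s, quantile μ m ∂unitVolume

section TailIntegral

variable {μ : Measure ℝ} [IsProbabilityMeasure μ] (hμ : Integrable (fun y : ℝ => y) μ)
include hμ

lemma integrable_max_sub_zero (x : ℝ) : Integrable (fun y => max (y - x) 0) μ :=
  (hμ.sub (integrable_const x)).pos_part

lemma quantileTailIntegral_eq_add (s x : ℝ) :
    quantileTailIntegral μ s
      = unitVolume.real (Ici s) * x + ∫ m in Ici s, (quantile μ m - x) ∂unitVolume := by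
  have hq : IntegrableOn (quantile μ) (Ici s) unitVolume := (hμ.comp_quantile μ).integrableOn
  rw [integral_sub hq (integrableOn_const (measure_ne_top _ _)), setIntegral_const,
    smul_eq_mul, quantileTailIntegral]
  ring

lemma quantileTailIntegral_le (s x : ℝ) :
    quantileTailIntegral μ s ≤ unitVolume.real (Ici s) * x + ∫ y, max (y - x) 0 ∂μ := by
  have hpos := (integrable_max_sub_zero hμ x).comp_quantile μ
  rw [quantileTailIntegral_eq_add hμ s x,
    ← integral_comp_quantile μ (integrable_max_sub_zero hμ x).aestronglyMeasurable]
  gcongr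
  calc ∫ m in Ici s, (quantile μ m - x) ∂unitVolume
      ≤ ∫ m in Ici s, max (quantile μ m - x) 0 ∂unitVolume :=
        setIntegral_mono ((hμ.comp_quantile μ).sub (integrable_const x)).integrableOn
          hpos.integrableOn fun _ => le_max_left _ _
    _ ≤ ∫ m, max (quantile μ m - x) 0 ∂unitVolume :=
        setIntegral_le_integral hpos (Eventually.of_forall fun _ => le_max_right _ _)

lemma quantileTailIntegral_eq {s : ℝ} (hs : s ∈ Ioo 0 1) :
    quantileTailIntegral μ s
      = unitVolume.real (Ici s) * quantile μ s + ∫ y, max (y - quantile μ s) 0 ∂μ := by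
  set x := quantile μ s
  have hpos := (integrable_max_sub_zero hμ x).comp_quantile μ
  have hbelow : ∫ m in (Ici s)ᶜ, max (quantile μ m - x) 0 ∂unitVolume = 0 := by
    rw [setIntegral_congr_ae measurableSet_Ici.compl (g := fun _ => 0), integral_zero]
    filter_upwards [ae_mem_Ioo_unitVolume] with m hm hms
    exact max_eq_right (sub_nonpos.2 (quantile_monotoneOn μ hm hs (le_of_not_ge hms)))
  have habove : ∫ m in Ici s, max (quantile μ m - x) 0 ∂unitVolume
      = ∫ m in Ici s, (quantile μ m - x) ∂unitVolume := by
    refine setIntegral_congr_ae measurableSet_Ici ?_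
    filter_upwards [ae_mem_Ioo_unitVolume] with m hm hms
    exact max_eq_left (sub_nonneg.2 (quantile_monotoneOn μ hs hm hms))
  rw [quantileTailIntegral_eq_add hμ s x,
    ← integral_comp_quantile μ (integrable_max_sub_zero hμ x).aestronglyMeasurable,
    ← integral_add_compl measurableSet_Ici hpos, hbelow, habove, add_zero]

end TailIntegral

section Mixture

variable (μ₀ μ₁ : Measure ℝ) {t : ℝ}

lemma isProbabilityMeasure_mix [IsProbabilityMeasure μ₀] [IsProbabilityMeasure μ₁]
    (ht : t ∈ Icc (0 : ℝ) 1) :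
    IsProbabilityMeasure (ENNReal.ofReal (1 - t) • μ₀ + ENNReal.ofReal t • μ₁) := by
  constructor
  simp only [Measure.coe_add, Pi.add_apply, Measure.smul_apply, measure_univ, smul_eq_mul,
    mul_one]
  rw [← ENNReal.ofReal_add (by linarith [ht.2]) ht.1, sub_add_cancel, ENNReal.ofReal_one]

lemma integrable_mix {g : ℝ → ℝ} (h₀ : Integrable g μ₀) (h₁ : Integrable g μ₁) :
    Integrable g (ENNReal.ofReal (1 - t) • μ₀ + ENNReal.ofReal t • μ₁) :=
  (h₀.smul_measure ENNReal.ofReal_ne_top).add_measure (h₁.smul_measure ENNReal.ofReal_ne_top)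

lemma integral_mix (ht : t ∈ Icc (0 : ℝ) 1) {g : ℝ → ℝ} (h₀ : Integrable g μ₀)
    (h₁ : Integrable g μ₁) :
    ∫ y, g y ∂(ENNReal.ofReal (1 - t) • μ₀ + ENNReal.ofReal t • μ₁)
      = (1 - t) * ∫ y, g y ∂μ₀ + t * ∫ y, g y ∂μ₁ := by
  rw [integral_add_measure (h₀.smul_measure ENNReal.ofReal_ne_top)
    (h₁.smul_measure ENNReal.ofReal_ne_top), integral_smul_measure, integral_smul_measure,
    ENNReal.toReal_ofReal (by linarith [ht.2]), ENNReal.toReal_ofReal ht.1, smul_eq_mul,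
    smul_eq_mul]

lemma quantileTailIntegral_mix_ge [IsProbabilityMeasure μ₀] [IsProbabilityMeasure μ₁]
    (ht : t ∈ Icc (0 : ℝ) 1) (hμ₀ : Integrable (fun y : ℝ => y) μ₀)
    (hμ₁ : Integrable (fun y : ℝ => y) μ₁) {s : ℝ} (hs : s ∈ Ioo 0 1) :
    (1 - t) * quantileTailIntegral μ₀ s + t * quantileTailIntegral μ₁ s
      ≤ quantileTailIntegral (ENNReal.ofReal (1 - t) • μ₀ + ENNReal.ofReal t • μ₁) s := by
  have := isProbabilityMeasure_mix μ₀ μ₁ ht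
  set ν := ENNReal.ofReal (1 - t) • μ₀ + ENNReal.ofReal t • μ₁
  set x := quantile ν s
  have hν : quantileTailIntegral ν s
      = (1 - t) * (unitVolume.real (Ici s) * x + ∫ y, max (y - x) 0 ∂μ₀)
        + t * (unitVolume.real (Ici s) * x + ∫ y, max (y - x) 0 ∂μ₁) := by
    rw [quantileTailIntegral_eq (integrable_mix μ₀ μ₁ hμ₀ hμ₁) hs,
      integral_mix μ₀ μ₁ ht (integrable_max_sub_zero hμ₀ x) (integrable_max_sub_zero hμ₁ x)]
    ring
  rw [hν]
  gcongr
  · linarith [ht.2]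
  · exact quantileTailIntegral_le hμ₀ s x
  · exact ht.1
  · exact quantileTailIntegral_le hμ₁ s x

end Mixture

section Stieltjes

variable (f : StieltjesFunction ℝ)

instance : IsFiniteMeasure (f.measure.restrict (Ioo 0 1)) :=
  isFiniteMeasure_restrict.2 measure_Ioo_lt_top.ne

lemma integral_indicator_Ici_quantile (μ : Measure ℝ) {m : ℝ} (hm : m ∈ Ioo 0 1) :
    ∫ s, (Ici s).indicator (quantile μ) m ∂(f.measure.restrict (Ioo 0 1))
      = quantile μ m * (f m - f 0) := by
  have hIic : Iic m ∩ Ioo 0 1 = Ioc 0 m := by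
    ext y
    simp only [mem_inter_iff, mem_Iic, mem_Ioo, mem_Ioc]
    exact ⟨fun h => ⟨h.2.1, h.1⟩, fun h => ⟨h.2, h.1, h.2.trans_lt hm.2⟩⟩
  have hind : (fun s => (Ici s).indicator (quantile μ) m)
      = (Iic m).indicator fun _ => quantile μ m := by
    ext s
    simp only [indicator, mem_Ici, mem_Iic]
  rw [hind, integral_indicator_const _ measurableSet_Iic, measureReal_def,
    Measure.restrict_apply measurableSet_Iic, hIic, f.measure_Ioc,
    ENNReal.toReal_ofReal (sub_nonneg.2 (f.mono hm.1.le)), smul_eq_mul, mul_comm]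

variable {μ : Measure ℝ} [IsProbabilityMeasure μ] (hμ : Integrable (fun y : ℝ => y) μ)
include hμ

lemma integrable_indicator_Ici_quantile :
    Integrable (fun p : ℝ × ℝ => (Ici p.2).indicator (quantile μ) p.1)
      (unitVolume.prod (f.measure.restrict (Ioo 0 1))) := by
  have hK : (fun p : ℝ × ℝ => (Ici p.2).indicator (quantile μ) p.1)
      = {p : ℝ × ℝ | p.2 ≤ p.1}.indicator fun p => quantile μ p.1 * 1 := by
    ext p
    simp only [indicator, mem_Ici, mem_ofPred_eq, mul_one]
  rw [hK]
  exact ((hμ.comp_quantile μ).mul_prod (integrable_const 1)).indicator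
    (measurableSet_le measurable_snd measurable_fst)

lemma integrable_quantileTailIntegral :
    Integrable (quantileTailIntegral μ) (f.measure.restrict (Ioo 0 1)) :=
  (integrable_indicator_Ici_quantile f hμ).integral_prod_right.congr
    (ae_of_all _ fun _ => integral_indicator measurableSet_Ici)

lemma integral_quantile_mul_stieltjes :
    ∫ m, quantile μ m * f m ∂unitVolume
      = f 0 * ∫ y, y ∂μ + ∫ s, quantileTailIntegral μ s ∂(f.measure.restrict (Ioo 0 1)) := by
  set ν := f.measure.restrict (Ioo 0 1)
  have hK := integrable_indicator_Ici_quantile f hμ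
  calc ∫ m, quantile μ m * f m ∂unitVolume
      = ∫ m, (quantile μ m * f 0 + ∫ s, (Ici s).indicator (quantile μ) m ∂ν) ∂unitVolume := by
        refine integral_congr_ae ?_
        filter_upwards [ae_mem_Ioo_unitVolume] with m hm
        rw [integral_indicator_Ici_quantile f μ hm]
        ring
    _ = f 0 * ∫ y, y ∂μ + ∫ m, ∫ s, (Ici s).indicator (quantile μ) m ∂ν ∂unitVolume := by
        rw [integral_add ((hμ.comp_quantile μ).mul_const _) hK.integral_prod_left,
          integral_mul_const, integral_comp_quantile μ hμ.aestronglyMeasurable, mul_comm]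
    _ = f 0 * ∫ y, y ∂μ + ∫ s, quantileTailIntegral μ s ∂ν := by
        rw [integral_integral_swap hK]
        simp only [integral_indicator measurableSet_Ici, quantileTailIntegral]

lemma specRisk_eq_of_ae_eq {α : ℝ → ℝ} (hα : α =ᵐ[unitVolume] f) :
    specRisk α μ
      = f 0 * ∫ y, y ∂μ + ∫ s, quantileTailIntegral μ s ∂(f.measure.restrict (Ioo 0 1)) := by
  rw [← integral_quantile_mul_stieltjes f hμ, specRisk, integral_Icc_eq_integral_Ioo]
  refine integral_congr_ae ?_
  filter_upwards [hα] with m hm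
  rw [hm]

end Stieltjes

lemma integral_quantileTailIntegral_mix_ge (f : StieltjesFunction ℝ) (μ₀ μ₁ : Measure ℝ)
    [IsProbabilityMeasure μ₀] [IsProbabilityMeasure μ₁] {t : ℝ} (ht : t ∈ Icc (0 : ℝ) 1)
    (hμ₀ : Integrable (fun y : ℝ => y) μ₀) (hμ₁ : Integrable (fun y : ℝ => y) μ₁) :
    (1 - t) * ∫ s, quantileTailIntegral μ₀ s ∂(f.measure.restrict (Ioo 0 1))
        + t * ∫ s, quantileTailIntegral μ₁ s ∂(f.measure.restrict (Ioo 0 1))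
      ≤ ∫ s, quantileTailIntegral (ENNReal.ofReal (1 - t) • μ₀ + ENNReal.ofReal t • μ₁) s
          ∂(f.measure.restrict (Ioo 0 1)) := by
  have := isProbabilityMeasure_mix μ₀ μ₁ ht
  have h₀ := (integrable_quantileTailIntegral f hμ₀).const_mul (1 - t)
  have h₁ := (integrable_quantileTailIntegral f hμ₁).const_mul t
  rw [← integral_const_mul, ← integral_const_mul, ← integral_add h₀ h₁]
  refine integral_mono_ae (h₀.add h₁)
    (integrable_quantileTailIntegral f (integrable_mix μ₀ μ₁ hμ₀ hμ₁)) ?_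
  filter_upwards [ae_restrict_mem measurableSet_Ioo] with s hs
  exact quantileTailIntegral_mix_ge μ₀ μ₁ ht hμ₀ hμ₁ hs

lemma Monotone.ae_eq_stieltjesFunction {g : ℝ → ℝ} (hg : Monotone g) :
    g =ᵐ[volume] hg.stieltjesFunction := by
  filter_upwards [ae_iff.2 (hg.countable_not_continuousAt.measure_zero volume)] with m hm
  rw [hg.stieltjesFunction_eq, rightLim_eq_of_tendsto (hm.tendsto.mono_left nhdsWithin_le_nhds)]

lemma MonotoneOn.exists_stieltjesFunction_ae_eq {α : ℝ → ℝ} (hα : MonotoneOn α (Icc 0 1)) :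
    ∃ f : StieltjesFunction ℝ, α =ᵐ[unitVolume] f := by
  have hg := (monotoneOn_iff_monotone.1 hα).IccExtend zero_le_one
  refine ⟨hg.stieltjesFunction, ?_⟩
  filter_upwards [ae_mem_Ioo_unitVolume, ae_restrict_of_ae hg.ae_eq_stieltjesFunction]
    with m hm hgm
  rw [← hgm, IccExtend_of_mem _ _ (Ioo_subset_Icc_self hm)]

theorem stmt3_general (α : ℝ → ℝ) (hα_mono : MonotoneOn α (Icc 0 1))
    (μ₀ μ₁ : Measure ℝ) [IsProbabilityMeasure μ₀] [IsProbabilityMeasure μ₁]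
    (hμ₀ : Integrable (fun x : ℝ => x) μ₀) (hμ₁ : Integrable (fun x : ℝ => x) μ₁)
    (t : ℝ) (ht : t ∈ Icc (0:ℝ) 1) :
    (1 - t) * specRisk α μ₀ + t * specRisk α μ₁ ≤
      specRisk α (ENNReal.ofReal (1 - t) • μ₀ + ENNReal.ofReal t • μ₁) := by
  obtain ⟨f, hf⟩ := hα_mono.exists_stieltjesFunction_ae_eq
  have := isProbabilityMeasure_mix μ₀ μ₁ ht
  rw [specRisk_eq_of_ae_eq f hμ₀ hf, specRisk_eq_of_ae_eq f hμ₁ hf,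
    specRisk_eq_of_ae_eq f (integrable_mix μ₀ μ₁ hμ₀ hμ₁) hf, integral_mix μ₀ μ₁ ht hμ₀ hμ₁]
  linarith [integral_quantileTailIntegral_mix_ge f μ₀ μ₁ ht hμ₀ hμ₁]

/-- the spectral risk measure `R_α` is concave on the set of
probability measures on ℝ with finite first moment. -/
theorem stmt3 (α : ℝ → ℝ) (hα_mono : MonotoneOn α (Icc 0 1))
    (hα_nonneg : ∀ m ∈ Icc (0:ℝ) 1, 0 ≤ α m)
    (μ₀ μ₁ : Measure ℝ) [IsProbabilityMeasure μ₀] [IsProbabilityMeasure μ₁]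
    (hμ₀ : Integrable (fun x : ℝ => x) μ₀) (hμ₁ : Integrable (fun x : ℝ => x) μ₁)
    (t : ℝ) (ht : t ∈ Icc (0:ℝ) 1) :
    (1 - t) * specRisk α μ₀ + t * specRisk α μ₁ ≤
      specRisk α (ENNReal.ofReal (1 - t) • μ₀ + ENNReal.ofReal t • μ₁) :=
  stmt3_general α hα_mono μ₀ μ₁ hμ₀ hμ₁ t ht
end

section
/- Let X_1, ..., X_d be Polish spaces, μ_i ∈ P(X_i), let α : [0,1] → [0,∞) be nondecreasing and bounded with μ_0 = α_# Leb_{[0,1]}, and let b : X_1 × ... × X_d → ℝ be Borel measurable and bounded. Then for every γ ∈ Γ(μ_1, ..., μ_d) there exists π ∈ Γ(μ_0, μ_1, ..., μ_d) whose (1,...,d)-marginal is γ and such that the pushforward ((x_0, x_1, ..., x_d) ↦ (x_0, b(x_1, ..., x_d)))_# π has monotone increasing support. -/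
/-!
The law `ν = b_# γ` is carried by `[-C, C]`, so its quantile function `G` is monotone and bounded
on all of `ℝ` and pushes `Leb_{[0,1]}` forward to `ν`. The law `σ` of `t ↦ (α t, G t)` under
`Leb_{[0,1]}` has marginals `μ_0` and `ν` and lives on the closure of the monotone curve
`t ↦ (α t, G t)`. Since its second marginal is `b_# γ`, disintegrating `σ` along `ℝ` glues it to
`γ` along `b`: this gives `π` with `(1,…,d)`-marginal `γ` whose image under `(x_0, x) ↦ (x_0, b x)`
is `σ` itself.
-/

open MeasureTheory Set

/-- Lebesgue measure restricted to `[0,1]`. -/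
noncomputable def lebI : Measure ℝ := volume.restrict (Icc (0:ℝ) 1)

/-- Topological support of a measure. -/
def msupport {X : Type*} [TopologicalSpace X] [MeasurableSpace X] (π : Measure X) :
    Set X :=
  {x | ∀ U ∈ nhds x, π U ≠ 0}

/-- A subset of ℝ² is monotone increasing if `x < x'` implies `y ≤ y'` for any two
of its points `(x,y)`, `(x',y')`. -/
def MonotoneIncrSet (S : Set (ℝ × ℝ)) : Prop :=
  ∀ p ∈ S, ∀ q ∈ S, p.1 < q.1 → p.2 ≤ q.2

open ProbabilityTheory Filter

instance isProbabilityMeasure_lebI : IsProbabilityMeasure lebI :=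
  ⟨by simp [lebI]⟩

lemma ae_mem_Ioo_lebI : ∀ᵐ t ∂lebI, t ∈ Ioo (0 : ℝ) 1 := by
  rw [lebI, ← Measure.restrict_congr_set Ioo_ae_eq_Icc]
  exact ae_restrict_mem measurableSet_Ioo

lemma lebI_Iic {y : ℝ} (hy : y ∈ Icc (0 : ℝ) 1) : lebI (Iic y) = ENNReal.ofReal y := by
  have : Iic y ∩ Icc 0 1 = Icc 0 y := by
    ext t; simp only [mem_inter_iff, mem_Iic, mem_Icc]; grind
  rw [lebI, Measure.restrict_apply measurableSet_Iic, this, Real.volume_Icc, sub_zero]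

/-- The quantile function of `ν`, clamped in `t` and in `x` so that it is monotone on all of
`ℝ`; only its values on `(0,1)` matter. -/
noncomputable def boundedQuantile (ν : Measure ℝ) (C t : ℝ) : ℝ :=
  sInf {x ∈ Icc (-C) C | min t 1 ≤ cdf ν x}

section boundedQuantile

variable {ν : Measure ℝ} [IsProbabilityMeasure ν] {C : ℝ}

lemma cdf_eq_one_of_ae_abs_le (hν : ∀ᵐ x ∂ν, |x| ≤ C) : cdf ν C = 1 := by
  have : ν (Iic C)ᶜ = 0 := by
    refine measure_mono_null (fun x (hx : ¬ x ≤ C) => ?_) (ae_iff.mp hν)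
    intro habs
    exact hx ((le_abs_self x).trans habs)
  rw [cdf_eq_real, measureReal_def, (prob_compl_eq_zero_iff measurableSet_Iic).mp this,
    ENNReal.toReal_one]

lemma cdf_eq_zero_of_ae_abs_le (hν : ∀ᵐ x ∂ν, |x| ≤ C) {x : ℝ} (hx : x < -C) :
    cdf ν x = 0 := by
  have : ν (Iic x) = 0 := by
    refine measure_mono_null (fun y (hy : y ≤ x) => ?_) (ae_iff.mp hν)
    intro habs
    linarith [neg_abs_le y]
  rw [cdf_eq_real, measureReal_def, this, ENNReal.toReal_zero]

variable (hν : ∀ᵐ x ∂ν, |x| ≤ C)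
include hν

lemma self_mem_boundedQuantile_set (t : ℝ) : C ∈ {x ∈ Icc (-C) C | min t 1 ≤ cdf ν x} := by
  obtain ⟨x, hx⟩ := hν.exists
  refine ⟨⟨?_, le_rfl⟩, (min_le_right t 1).trans (cdf_eq_one_of_ae_abs_le hν).ge⟩
  linarith [abs_nonneg x]

lemma boundedQuantile_monotone : Monotone (boundedQuantile ν C) := by
  intro t t' htt'
  refine csInf_le_csInf ⟨-C, fun x hx => hx.1.1⟩ ⟨C, self_mem_boundedQuantile_set hν t'⟩ ?_
  exact fun x hx => ⟨hx.1, (min_le_min_right 1 htt').trans hx.2⟩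

lemma boundedQuantile_le_iff {t : ℝ} (ht : t ∈ Ioo (0 : ℝ) 1) (x : ℝ) :
    boundedQuantile ν C t ≤ x ↔ t ≤ cdf ν x := by
  have hmin : min t 1 = t := min_eq_left ht.2.le
  have hbdd : BddBelow {x ∈ Icc (-C) C | min t 1 ≤ cdf ν x} := ⟨-C, fun x hx => hx.1.1⟩
  constructor
  · intro hx
    have hright : ∀ y > boundedQuantile ν C t, t ≤ cdf ν y := fun y hy => by
      obtain ⟨z, hz, hzy⟩ := exists_lt_of_csInf_lt ⟨C, self_mem_boundedQuantile_set hν t⟩ hy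
      exact (hmin ▸ hz.2).trans ((cdf ν).mono hzy.le)
    -- right continuity of the cdf puts the infimum itself in the set
    have hquantile : t ≤ cdf ν (boundedQuantile ν C t) :=
      ge_of_tendsto (((cdf ν).right_continuous _).mono Ioi_subset_Ici_self)
        (eventually_nhdsWithin_of_forall hright)
    exact hquantile.trans ((cdf ν).mono hx)
  · intro hx
    rcases le_or_gt C x with hCx | hxC
    · exact (csInf_le hbdd (self_mem_boundedQuantile_set hν t)).trans hCx
    · have hx' : -C ≤ x := by
        by_contra! hlt
        linarith [cdf_eq_zero_of_ae_abs_le hν hlt, ht.1]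
      exact csInf_le hbdd ⟨⟨hx', hxC.le⟩, hmin.symm ▸ hx⟩

lemma map_boundedQuantile_lebI : lebI.map (boundedQuantile ν C) = ν := by
  have hmeas := (boundedQuantile_monotone hν).measurable
  have : IsProbabilityMeasure (lebI.map (boundedQuantile ν C)) :=
    Measure.isProbabilityMeasure_map hmeas.aemeasurable
  refine Measure.ext_of_Iic _ _ fun x => ?_
  have hpre : boundedQuantile ν C ⁻¹' Iic x =ᵐ[lebI] Iic (cdf ν x) :=
    eventuallyEq_set.mpr (ae_mem_Ioo_lebI.mono fun t ht => boundedQuantile_le_iff hν ht x)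
  rw [Measure.map_apply hmeas measurableSet_Iic, measure_congr hpre,
    lebI_Iic ⟨cdf_nonneg ν x, cdf_le_one ν x⟩, ofReal_cdf]

end boundedQuantile

lemma msupport_map_subset_closure_image {Ω X : Type*} [MeasurableSpace Ω] [TopologicalSpace X]
    [MeasurableSpace X] [OpensMeasurableSpace X] {μ : Measure Ω} {f : Ω → X}
    (hf : AEMeasurable f μ) {s : Set Ω} (hs : ∀ᵐ ω ∂μ, ω ∈ s) :
    msupport (μ.map f) ⊆ closure (f '' s) := by
  intro z hz
  by_contra hzc
  have hopen : IsOpen (closure (f '' s))ᶜ := isClosed_closure.isOpen_compl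
  refine hz _ (hopen.mem_nhds hzc) ?_
  rw [Measure.map_apply_of_aemeasurable hf hopen.measurableSet]
  refine measure_mono_null (fun ω hω hωs => hω (subset_closure (mem_image_of_mem f hωs)))
    (ae_iff.mp hs)

lemma MonotoneIncrSet.mono {S T : Set (ℝ × ℝ)} (hT : MonotoneIncrSet T) (h : S ⊆ T) :
    MonotoneIncrSet S := fun p hp q hq => hT p (h hp) q (h hq)

lemma MonotoneIncrSet.closure {S : Set (ℝ × ℝ)} (hS : MonotoneIncrSet S) :
    MonotoneIncrSet (closure S) := by
  set U : Set ((ℝ × ℝ) × (ℝ × ℝ)) := {pq | pq.1.1 < pq.2.1 ∧ pq.2.2 < pq.1.2}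
  have hU : IsOpen U :=
    (isOpen_lt (f := fun pq : (ℝ × ℝ) × (ℝ × ℝ) => pq.1.1) (by fun_prop) (by fun_prop)).inter
      (isOpen_lt (f := fun pq : (ℝ × ℝ) × (ℝ × ℝ) => pq.2.2) (by fun_prop) (by fun_prop))
  have hdisj : Disjoint U (S ×ˢ S) := disjoint_left.mpr fun pq hpq hS' =>
    (hS _ hS'.1 _ hS'.2 hpq.1).not_gt hpq.2
  intro p hp q hq hpq
  by_contra! hqp
  have hpq_mem : (p, q) ∈ _root_.closure (S ×ˢ S) := by
    rw [closure_prod_eq]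
    exact ⟨hp, hq⟩
  exact disjoint_left.mp (hdisj.closure_right hU) ⟨hpq, hqp⟩ hpq_mem

lemma monotoneIncrSet_image {a g : ℝ → ℝ} {s : Set ℝ} (ha : MonotoneOn a s)
    (hg : MonotoneOn g s) : MonotoneIncrSet ((fun t => (a t, g t)) '' s) := by
  rintro _ ⟨t, ht, rfl⟩ _ ⟨t', ht', rfl⟩ hlt
  exact hg ht ht' (le_of_lt (lt_of_not_ge fun h => (ha ht' ht h).not_gt hlt))

lemma MeasureTheory.Measure.compProd_comap_map_prodMap {Ω α β : Type*} [MeasurableSpace Ω] [MeasurableSpace α]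
    [MeasurableSpace β] (μ : Measure Ω) [SFinite μ] (κ : Kernel α β) [IsSFiniteKernel κ]
    {f : Ω → α} (hf : Measurable f) :
    (μ ⊗ₘ κ.comap f hf).map (Prod.map f id) = μ.map f ⊗ₘ κ := by
  have hfid : Measurable (Prod.map f (id : β → β)) := hf.prodMap measurable_id
  ext s hs
  rw [Measure.map_apply hfid hs, Measure.compProd_apply (hfid hs), Measure.compProd_apply hs,
    lintegral_map (Kernel.measurable_kernel_prodMk_left hs) hf]
  rfl

theorem exists_map_fst_eq_and_map_snd_eq_and_map_prodMap_eq {Ω α β : Type*} [MeasurableSpace Ω]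
    [MeasurableSpace α] [MeasurableSpace β] [StandardBorelSpace β] [Nonempty β]
    (γ : Measure Ω) [IsProbabilityMeasure γ] {f : Ω → α} (hf : Measurable f)
    (σ : Measure (β × α)) [IsFiniteMeasure σ] (hσ : σ.snd = γ.map f) :
    ∃ π : Measure (β × Ω), IsProbabilityMeasure π ∧ π.map Prod.fst = σ.fst ∧
      π.map Prod.snd = γ ∧ π.map (Prod.map id f) = σ := by
  set σ' := σ.map Prod.swap
  set P := γ ⊗ₘ σ'.condKernel.comap f hf
  have hσ' : σ'.fst = γ.map f := by rw [σ.fst_map_swap, hσ]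
  have hP : P.map (Prod.map f id) = σ' := by
    rw [Measure.compProd_comap_map_prodMap, ← hσ', σ'.disintegrate]
  have hPσ : (P.map Prod.swap).map (Prod.map id f) = σ := by
    rw [Measure.map_map (by fun_prop) measurable_swap,
      show Prod.map id f ∘ Prod.swap = Prod.swap ∘ Prod.map f (id : β → β) from rfl,
      ← Measure.map_map measurable_swap (hf.prodMap measurable_id), hP,
      Measure.map_map measurable_swap measurable_swap]
    exact Measure.map_id
  refine ⟨P.map Prod.swap, Measure.isProbabilityMeasure_map measurable_swap.aemeasurable,
    ?_, ?_, hPσ⟩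
  · rw [← hPσ, Measure.fst, Measure.map_map (f := Prod.map id f) measurable_fst (by fun_prop)]
    rfl
  · rw [Measure.map_map measurable_snd measurable_swap]
    exact Measure.fst_compProd _ _

theorem stmt6_general (d : ℕ) (X : Fin d → Type*) [∀ i, MeasurableSpace (X i)]
    (α : ℝ → ℝ) (hα_mono : MonotoneOn α (Icc 0 1))
    (b : (∀ i, X i) → ℝ) (hb_meas : Measurable b) (hb_bdd : ∃ C, ∀ z, |b z| ≤ C)
    (γ : Measure (∀ i, X i)) (hγ_prob : IsProbabilityMeasure γ) :
    ∃ π : Measure (ℝ × ∀ i, X i), IsProbabilityMeasure π ∧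
      π.map Prod.fst = lebI.map α ∧
      π.map Prod.snd = γ ∧
      MonotoneIncrSet (msupport (π.map (fun p => (p.1, b p.2)))) := by
  obtain ⟨C, hbC⟩ := hb_bdd
  have : IsProbabilityMeasure (γ.map b) := Measure.isProbabilityMeasure_map hb_meas.aemeasurable
  have hν : ∀ᵐ y ∂γ.map b, |y| ≤ C := (ae_map_iff hb_meas.aemeasurable
    (measurableSet_le measurable_abs measurable_const)).mpr (ae_of_all _ hbC)
  set G := boundedQuantile (γ.map b) C
  have hG : Monotone G := boundedQuantile_monotone hν
  have hα : AEMeasurable α lebI := aemeasurable_restrict_of_monotoneOn measurableSet_Icc hα_mono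
  have hαG : AEMeasurable (fun t => (α t, G t)) lebI := hα.prodMk hG.measurable.aemeasurable
  have : IsProbabilityMeasure (lebI.map fun t => (α t, G t)) :=
    Measure.isProbabilityMeasure_map hαG
  have hσ : (lebI.map fun t => (α t, G t)).snd = γ.map b := by
    rw [Measure.snd, AEMeasurable.map_map_of_aemeasurable measurable_snd.aemeasurable hαG]
    exact map_boundedQuantile_lebI hν
  obtain ⟨π, hπ, hπfst, hπγ, hπσ⟩ :=
    exists_map_fst_eq_and_map_snd_eq_and_map_prodMap_eq γ hb_meas _ hσ
  refine ⟨π, hπ, ?_, hπγ, ?_⟩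
  · rw [hπfst, Measure.fst, AEMeasurable.map_map_of_aemeasurable measurable_fst.aemeasurable hαG]
    rfl
  · rw [show (fun p : ℝ × _ => (p.1, b p.2)) = Prod.map id b from rfl, hπσ]
    exact (monotoneIncrSet_image hα_mono (hG.monotoneOn _)).closure.mono
      (msupport_map_subset_closure_image hαG (ae_restrict_mem measurableSet_Icc))

/-- gluing lemma: for any `γ ∈ Γ(μ_1,...,μ_d)` there is a
`π ∈ Γ(μ_0, μ_1,...,μ_d)` (with `μ_0 = α_# Leb_{[0,1]}`) whose `(1,...,d)`-marginal
is `γ` and such that `((x_0, x) ↦ (x_0, b x))_# π` has monotone increasing support. -/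
theorem stmt6 (d : ℕ) (X : Fin d → Type*) [∀ i, MeasurableSpace (X i)]
    [∀ i, TopologicalSpace (X i)] [∀ i, PolishSpace (X i)] [∀ i, BorelSpace (X i)]
    (μ : ∀ i, Measure (X i)) (hμ : ∀ i, IsProbabilityMeasure (μ i))
    (α : ℝ → ℝ) (hα_mono : MonotoneOn α (Icc 0 1))
    (hα_nonneg : ∀ m ∈ Icc (0:ℝ) 1, 0 ≤ α m)
    (b : (∀ i, X i) → ℝ) (hb_meas : Measurable b) (hb_bdd : ∃ C, ∀ z, |b z| ≤ C)
    (γ : Measure (∀ i, X i)) (hγ_prob : IsProbabilityMeasure γ)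
    (hγi : ∀ i, γ.map (fun z => z i) = μ i) :
    ∃ π : Measure (ℝ × ∀ i, X i), IsProbabilityMeasure π ∧
      π.map Prod.fst = lebI.map α ∧
      π.map Prod.snd = γ ∧
      MonotoneIncrSet (msupport (π.map (fun p => (p.1, b p.2)))) :=
  stmt6_general d X α hα_mono b hb_meas hb_bdd γ hγ_prob
end
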